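/- For the fine-grained attribution over {f, x_1, …, x_d} with linear mechanisms f^(k)(x) = ∑_j β_j^(k) x_j, the Shapley value of the mechanism equals the closed-form linear attribution ∑_j ((x_j¹ + x_j²)/2)(β_j² − β_j¹). -/

import Mathlib

/-!
Adding the mechanism to a coalition `A` of variables changes `v` by
`∑ j, (β²ⱼ - β¹ⱼ) * (x²ⱼ if j ∈ A else x¹ⱼ)`. Complementation within the set of variables
preserves the Shapley weights, so the coalitions containing a given variable carry exactly
half of the total weight `1`; hence each `x^kⱼ` enters with weight `1/2`.
-/

open Finset

noncomputable def shapleyWeight (n k : ℕ) : ℝ :=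
  (k.factorial * (n - k).factorial : ℝ) / (n + 1).factorial

lemma shapleyWeight_sub {n k : ℕ} (h : k ≤ n) : shapleyWeight n (n - k) = shapleyWeight n k := by
  simp only [shapleyWeight, Nat.sub_sub_self h, mul_comm]

lemma choose_mul_shapleyWeight {n k : ℕ} (h : k ≤ n) :
    n.choose k * shapleyWeight n k = 1 / (n + 1) := by
  have hfac : (n.choose k * k.factorial * (n - k).factorial : ℝ) = n.factorial := by
    exact_mod_cast Nat.choose_mul_factorial_mul_factorial h
  have hchoose : (n.choose k : ℝ) ≠ 0 := by exact_mod_cast (Nat.choose_pos h).ne'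
  rw [shapleyWeight, Nat.factorial_succ, Nat.cast_mul, ← hfac]
  field_simp
  push_cast
  ring

lemma sum_powerset_shapleyWeight {α : Type*} (S : Finset α) :
    ∑ A ∈ S.powerset, shapleyWeight S.card A.card = 1 := by
  rw [sum_powerset_apply_card (shapleyWeight S.card),
    sum_congr rfl fun k hk => (nsmul_eq_mul _ _).trans
      (choose_mul_shapleyWeight (Nat.lt_succ_iff.mp (mem_range.mp hk))),
    sum_const, card_range, nsmul_eq_mul]
  push_cast
  field_simp

lemma sum_powerset_filter_mem_shapleyWeight {α : Type*} [DecidableEq α] {S : Finset α} {t : α}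
    (ht : t ∈ S) : ∑ A ∈ S.powerset with t ∈ A, shapleyWeight S.card A.card = 1 / 2 := by
  have hcompl : ∑ A ∈ S.powerset with t ∈ A, shapleyWeight S.card A.card
      = ∑ A ∈ S.powerset with t ∉ A, shapleyWeight S.card A.card := by
    refine sum_nbij' (S \ ·) (S \ ·) ?_ ?_ ?_ ?_ ?_ <;>
      simp only [mem_filter, mem_powerset]
    · exact fun A ⟨_, htA⟩ => ⟨sdiff_subset, fun h => (mem_sdiff.1 h).2 htA⟩
    · exact fun B ⟨_, htB⟩ => ⟨sdiff_subset, mem_sdiff.2 ⟨ht, htB⟩⟩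
    · exact fun A ⟨hA, _⟩ => Finset.sdiff_sdiff_eq_self hA
    · exact fun B ⟨hB, _⟩ => Finset.sdiff_sdiff_eq_self hB
    · intro A ⟨hA, _⟩
      rw [card_sdiff_of_subset hA, shapleyWeight_sub (card_le_card hA)]
  have htotal := sum_powerset_shapleyWeight S
  rw [← sum_filter_add_sum_filter_not _ (t ∈ ·), ← hcompl] at htotal
  linarith

lemma sum_powerset_shapleyWeight_mul_ite {α : Type*} [DecidableEq α] {S : Finset α} {t : α}
    (ht : t ∈ S) (a b : ℝ) :
    ∑ A ∈ S.powerset, shapleyWeight S.card A.card * (if t ∈ A then a else b) = (a + b) / 2 := by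
  have hmem := sum_powerset_filter_mem_shapleyWeight ht
  have htotal := sum_powerset_shapleyWeight S
  rw [← sum_filter_add_sum_filter_not _ (t ∈ ·), hmem] at htotal
  simp only [mul_ite, sum_ite, ← sum_mul, hmem]
  linear_combination b * htotal

theorem fine_shapley_linear_mechanism (d : ℕ) (β1 β2 x1 x2 : Fin d → ℝ) :
    let v : Finset (Fin (d + 1)) → ℝ := fun A =>
      ∑ j, (if (0 : Fin (d + 1)) ∈ A then β2 j else β1 j) *
        (if (j.succ : Fin (d + 1)) ∈ A then x2 j else x1 j)
    let φ : Fin (d + 1) → ℝ := fun w =>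
      ∑ A ∈ (Finset.univ \ {w}).powerset,
        ((A.card.factorial * (d - A.card).factorial : ℝ) / (d + 1).factorial) *
          (v (A ∪ {w}) - v A)
    φ 0 = ∑ j, ((x1 j + x2 j) / 2) * (β2 j - β1 j) := by
  intro v φ
  set S : Finset (Fin (d + 1)) := univ \ {0}
  have hmarginal : ∀ A ∈ S.powerset,
      v (A ∪ {0}) - v A = ∑ j, (β2 j - β1 j) * (if j.succ ∈ A then x2 j else x1 j) := by
    intro A hA
    have h0 : (0 : Fin (d + 1)) ∉ A := fun h => by simpa [S] using mem_powerset.1 hA h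
    simp only [v, ← sum_sub_distrib]
    refine sum_congr rfl fun j _ => ?_
    simp only [mem_union, mem_singleton, h0, Fin.succ_ne_zero, or_true, or_false, if_true,
      if_false]
    ring
  have hhalf : ∀ j : Fin d, ∑ A ∈ S.powerset,
      shapleyWeight d A.card * (if j.succ ∈ A then x2 j else x1 j) = (x2 j + x1 j) / 2 := by
    intro j
    have hcard : S.card = d := by simp [S, card_sdiff_of_subset]
    have h := sum_powerset_shapleyWeight_mul_ite (S := S) (t := j.succ)
      (by simp [S, Fin.succ_ne_zero]) (x2 j) (x1 j)
    rwa [hcard] at h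
  calc φ 0
      = ∑ A ∈ S.powerset, shapleyWeight d A.card *
          ∑ j, (β2 j - β1 j) * (if j.succ ∈ A then x2 j else x1 j) :=
        sum_congr rfl fun A hA => by rw [← hmarginal A hA]; rfl
    _ = ∑ j, (β2 j - β1 j) * ∑ A ∈ S.powerset,
          shapleyWeight d A.card * (if j.succ ∈ A then x2 j else x1 j) := by
        simp only [mul_sum]
        rw [sum_comm]
        simp only [mul_left_comm]
    _ = ∑ j, ((x1 j + x2 j) / 2) * (β2 j - β1 j) :=
        sum_congr rfl fun j _ => by rw [hhalf]; ring
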